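/- arXiv:math/0407136 — 4 statements merged into one kernel-verified Lean document; each statement's English description precedes it below -/
import Mathlib

section
/- Let ρ_k > 0 for k in a finite nonempty set K, let H_k be as above, and fix real numbers c_k ≤ y_k* (so H_k(c_k) ≥ 0). Then the function y ↦ Σ_{k∈K} ρ_k [H_k(y) - H_k(c_k)]⁺, restricted to (-∞, max_{k∈K} (y_k* ∧ c_k)], is a strictly decreasing continuous bijection onto [0, ∞). -/
theorem stmt5
    {K : Type*} [Fintype K] [Nonempty K]
    (ρ : K → ℝ) (hρ : ∀ k, 0 < ρ k)
    (H : K → ℝ → ℝ) (ystar : K → ℝ)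
    (hcont : ∀ k, Continuous (H k))
    (hanti : ∀ k, Antitone (H k))
    (hstrict : ∀ k, StrictAntiOn (H k) (Set.Iic (ystar k)))
    (hzero : ∀ k, ∀ y, ystar k ≤ y → H k y = 0)
    (hnonneg : ∀ k y, 0 ≤ H k y)
    (hinf : ∀ k, Filter.Tendsto (H k) Filter.atBot Filter.atTop)
    (c : K → ℝ) (hc : ∀ k, c k ≤ ystar k)
    (M : ℝ) (hM : M = Finset.univ.sup' Finset.univ_nonempty (fun k => min (ystar k) (c k))) :
    StrictAntiOn (fun y => ∑ k, ρ k * max (H k y - H k (c k)) 0) (Set.Iic M) ∧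
    ContinuousOn (fun y => ∑ k, ρ k * max (H k y - H k (c k)) 0) (Set.Iic M) ∧
    (fun y => ∑ k, ρ k * max (H k y - H k (c k)) 0) '' (Set.Iic M) = Set.Ici 0 := by
  set F : ℝ → ℝ := fun y => ∑ k, ρ k * max (H k y - H k (c k)) 0 with hF
  obtain ⟨k₀, -, hk₀⟩ := Finset.exists_mem_eq_sup' (Finset.univ_nonempty (α := K))
    (fun k => min (ystar k) (c k))
  rw [← hM] at hk₀
  have hMc : M ≤ c k₀ := hk₀.le.trans (min_le_right _ _)
  have hMy : M ≤ ystar k₀ := hk₀.le.trans (min_le_left _ _)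
  -- nonnegativity of F
  have hFnn : ∀ y, 0 ≤ F y := by
    intro y
    apply Finset.sum_nonneg
    intro k _
    exact mul_nonneg (hρ k).le (le_max_right _ _)
  -- antitone of each term
  have hterm_anti : ∀ k, Antitone (fun y => ρ k * max (H k y - H k (c k)) 0) := by
    intro k x y hxy
    exact mul_le_mul_of_nonneg_left
      (max_le_max (sub_le_sub_right (hanti k hxy) _) le_rfl) (hρ k).le
  -- strict antitone
  have hSA : StrictAntiOn F (Set.Iic M) := by
    intro x hx y hy hxy
    simp only [Set.mem_Iic] at hx hy
    apply Finset.sum_lt_sum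
    · intro k _
      exact hterm_anti k hxy.le
    · refine ⟨k₀, Finset.mem_univ _, ?_⟩
      have hxs : x ∈ Set.Iic (ystar k₀) := Set.mem_Iic.2 (hx.trans hMy)
      have hys : y ∈ Set.Iic (ystar k₀) := Set.mem_Iic.2 (hy.trans hMy)
      have h1 : H k₀ y < H k₀ x := hstrict k₀ hxs hys hxy
      have h2 : H k₀ (c k₀) ≤ H k₀ y := hanti k₀ (hy.trans hMc)
      have h3 : H k₀ (c k₀) ≤ H k₀ x := h2.trans h1.le
      rw [max_eq_left (sub_nonneg.2 h2), max_eq_left (sub_nonneg.2 h3)]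
      exact mul_lt_mul_of_pos_left (by linarith) (hρ k₀)
  have hFcont : Continuous F := by
    apply continuous_finset_sum
    intro k _
    exact continuous_const.mul (((hcont k).sub continuous_const).max continuous_const)
  refine ⟨hSA, hFcont.continuousOn, ?_⟩
  -- F M = 0
  have hFM : F M = 0 := by
    apply Finset.sum_eq_zero
    intro k _
    have hmin : min (ystar k) (c k) ≤ M := by
      rw [hM]; exact Finset.le_sup' (fun k => min (ystar k) (c k)) (Finset.mem_univ k)
    rcases min_le_iff.1 hmin with h | h
    · rw [hzero k M h, max_eq_right (by linarith [hnonneg k (c k)]), mul_zero]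
    · rw [max_eq_right (sub_nonpos.2 (hanti k h)), mul_zero]
  ext t
  simp only [Set.mem_image, Set.mem_Ici]
  constructor
  · rintro ⟨y, hy, rfl⟩
    exact hFnn y
  · intro ht
    -- find y ≤ M with F y ≥ t
    have htend : Filter.Tendsto (fun y => ρ k₀ * (H k₀ y - H k₀ (c k₀))) Filter.atBot
        Filter.atTop := by
      apply Filter.Tendsto.const_mul_atTop (hρ k₀)
      exact Filter.tendsto_atTop_add_const_right _ _ (hinf k₀)
    have hev : ∀ᶠ y in Filter.atBot, t ≤ ρ k₀ * (H k₀ y - H k₀ (c k₀)) :=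
      htend.eventually_ge_atTop t
    obtain ⟨y₁, hy₁⟩ := (hev.and (Filter.eventually_le_atBot M)).exists
    have hFy : t ≤ F y₁ := by
      calc t ≤ ρ k₀ * (H k₀ y₁ - H k₀ (c k₀)) := hy₁.1
        _ ≤ ρ k₀ * max (H k₀ y₁ - H k₀ (c k₀)) 0 :=
          mul_le_mul_of_nonneg_left (le_max_left _ _) (hρ k₀).le
        _ ≤ F y₁ := Finset.single_le_sum (f := fun k => ρ k * max (H k y₁ - H k (c k)) 0)
            (fun k _ => mul_nonneg (hρ k).le (le_max_right _ _)) (Finset.mem_univ k₀)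
    have := intermediate_value_Icc' hy₁.2 (hFcont.continuousOn (s := Set.Icc y₁ M))
    have ht' : t ∈ Set.Icc (F M) (F y₁) := ⟨hFM ▸ ht, hFy⟩
    obtain ⟨y, hy, hyt⟩ := this ht'
    exact ⟨y, hy.2, hyt⟩
end

section
/- In the acyclic network setting, the map Φ : D → [0,∞)^J defined by Φ_j(y) = Σ_{k∈C(j)} ρ_{k,j}[H_k(y_j) - H_k(min_{i∈S(k|j)} y_i)]⁺ is surjective: for every w ∈ [0,∞)^J there exists y ∈ D with Φ(y) = w. -/
open scoped Classical

/-- Stations visited by class `k` strictly before station `j` along its route. -/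
def priorStations {J K : ℕ} (path : Fin K → List (Fin J)) (k : Fin K) (j : Fin J) :
    Finset (Fin J) :=
  ((path k).takeWhile (fun i => i ≠ j)).toFinset

/-- The map `Φ`: the minimum over the empty set is interpreted as `+∞`
and `H k (+∞) = 0` (bounded support above). -/
noncomputable def PhiNet {J K : ℕ} (path : Fin K → List (Fin J))
    (ρ : Fin K → Fin J → ℝ) (H : Fin K → ℝ → ℝ) (y : Fin J → ℝ) : Fin J → ℝ :=
  fun j => ∑ k ∈ Finset.univ.filter (fun k => j ∈ path k),
    ρ k j * max (H k (y j) -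
      (if h : (priorStations path k j).Nonempty
        then H k ((priorStations path k j).inf' h y) else 0)) 0

/-- `π ∈ Π`: for every `m`, the station `π m` can be reached through the
stations `π 0, …, π (m-1)`, i.e. some class visits `π m` with all of its
prior stations among `π 0, …, π (m-1)`. -/
def AdmissiblePerm {J K : ℕ} (path : Fin K → List (Fin J)) (π : Equiv.Perm (Fin J)) : Prop :=
  ∀ m : Fin J, ∃ k : Fin K, π m ∈ path k ∧
    ∀ i ∈ priorStations path k (π m), ∃ m' : Fin J, m' < m ∧ π m' = i

/-- The set `D^π` of (3.12): the coordinates are ordered along `π` and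
`y (π m) ≤ max_{k ∈ K_{m-1}^π(π m)} y_k^*`. -/
def Dpi {J K : ℕ} (path : Fin K → List (Fin J)) (ystar : Fin K → ℝ)
    (π : Equiv.Perm (Fin J)) : Set (Fin J → ℝ) :=
  {y | (∀ m m' : Fin J, m ≤ m' → y (π m') ≤ y (π m)) ∧
    ∀ m : Fin J, ∃ k : Fin K,
      (π m ∈ path k ∧ ∀ i ∈ priorStations path k (π m), ∃ m' : Fin J, m' < m ∧ π m' = i) ∧
      y (π m) ≤ ystar k}

/-- The set `D = ⋃_{π ∈ Π} D^π` of (3.13). -/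
def Dset {J K : ℕ} (path : Fin K → List (Fin J)) (ystar : Fin K → ℝ) : Set (Fin J → ℝ) :=
  ⋃ π ∈ {π : Equiv.Perm (Fin J) | AdmissiblePerm path π}, Dpi path ystar π

/-! Fix the stations greedily, in decreasing order of `y`. Call a class ready at an unplaced
station `j` when all stations it visits before `j` are already fixed. Restricted to the ready
classes, `Φ_j` is a continuous nonincreasing function of `y_j` that tends to `∞` at `-∞` and
vanishes beyond their `y_k^*`, so `Φ_j = w_j` can be solved below every level fixed so far; fix
the station whose solution is largest. Since it is largest, at that level every other unplaced
station still has `Φ_j ≤ w_j`, and classes that have just become ready contribute nothing there,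
so the construction can go on. The order of fixing is an admissible permutation placing `y` in
`D`. -/

open Filter

theorem Continuous.exists_le_eq_of_tendsto_atBot {g : ℝ → ℝ} (hg : Continuous g)
    (hbot : Tendsto g atBot atTop) {c v : ℝ} (hc : g c ≤ v) : ∃ t ≤ c, g t = v := by
  obtain ⟨a, ha⟩ := eventually_atBot.mp (hbot.eventually (eventually_ge_atTop v))
  obtain ⟨t, ht, hgt⟩ := intermediate_value_Icc' (min_le_right a c) hg.continuousOn
    ⟨hc, ha _ (min_le_left a c)⟩
  exact ⟨t, ht.2, hgt⟩

section Network

variable {J K : ℕ} (path : Fin K → List (Fin J)) (ρ : Fin K → Fin J → ℝ) (H : Fin K → ℝ → ℝ)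

theorem priorStations_eq_of_eq_append {k : Fin K} {j : Fin J} {as bs : List (Fin J)}
    (hk : path k = as ++ j :: bs) (hj : j ∉ as) : priorStations path k j = as.toFinset := by
  have has : ∀ a ∈ as, decide (a ≠ j) = true := fun a ha => by
    simpa using fun h : a = j => hj (h ▸ ha)
  rw [priorStations, hk, List.takeWhile_append_of_pos has]
  simp

/-- `H_k(min_{i ∈ S(k|j)} y_i)`, read as `0` when `S(k|j)` is empty. -/
noncomputable def upstreamH (y : Fin J → ℝ) (k : Fin K) (j : Fin J) : ℝ :=
  if h : (priorStations path k j).Nonempty then H k ((priorStations path k j).inf' h y) else 0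

noncomputable def readyClasses (L : List (Fin J)) (j : Fin J) : Finset (Fin K) :=
  {k | j ∈ path k ∧ ∀ i ∈ priorStations path k j, i ∈ L}

/-- `Φ_j` with `y_j` replaced by `t` and only the classes whose upstream stations lie in `L`. -/
noncomputable def partialPhi (y : Fin J → ℝ) (L : List (Fin J)) (j : Fin J) (t : ℝ) : ℝ :=
  ∑ k ∈ readyClasses path L j, ρ k j * max (H k t - upstreamH path H y k j) 0

variable {path ρ H}

theorem ne_of_mem_priorStations {k : Fin K} {i j : Fin J} (hi : i ∈ priorStations path k j) :
    i ≠ j := by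
  simpa using List.mem_takeWhile_imp (List.mem_toFinset.mp hi)

theorem upstreamH_nonneg (hnonneg : ∀ k y, 0 ≤ H k y) (y : Fin J → ℝ) (k : Fin K) (j : Fin J) :
    0 ≤ upstreamH path H y k j := by
  unfold upstreamH
  split
  · exact hnonneg _ _
  · exact le_rfl

theorem upstreamH_congr {y y' : Fin J → ℝ} {k : Fin K} {j : Fin J}
    (hy : ∀ i ∈ priorStations path k j, y i = y' i) :
    upstreamH path H y k j = upstreamH path H y' k j := by
  unfold upstreamH
  split
  · exact congrArg (H k) (Finset.inf'_congr _ rfl hy)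
  · rfl

theorem max_sub_upstreamH_eq_zero (hanti : ∀ k, Antitone (H k)) {y : Fin J → ℝ} {k : Fin K}
    {i j : Fin J} (hi : i ∈ priorStations path k j) {t : ℝ} (hit : y i ≤ t) :
    max (H k t - upstreamH path H y k j) 0 = 0 := by
  have hmin : (priorStations path k j).inf' ⟨i, hi⟩ y ≤ t := (Finset.inf'_le y hi).trans hit
  rw [upstreamH, dif_pos ⟨i, hi⟩, max_eq_right (sub_nonpos.mpr (hanti k hmin))]

theorem mem_readyClasses {L : List (Fin J)} {j : Fin J} {k : Fin K} :
    k ∈ readyClasses path L j ↔ j ∈ path k ∧ ∀ i ∈ priorStations path k j, i ∈ L := by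
  simp [readyClasses]

theorem phiNet_eq_partialPhi {L : List (Fin J)} (hL : ∀ i, i ∈ L) (y : Fin J → ℝ) (j : Fin J) :
    PhiNet path ρ H y j = partialPhi path ρ H y L j (y j) := by
  unfold PhiNet partialPhi
  congr 1
  ext k
  simp [mem_readyClasses, hL]

theorem partialPhi_congr {y y' : Fin J → ℝ} {L : List (Fin J)} (hy : ∀ i ∈ L, y i = y' i)
    (j : Fin J) (t : ℝ) : partialPhi path ρ H y L j t = partialPhi path ρ H y' L j t :=
  Finset.sum_congr rfl fun k hk => by
    rw [upstreamH_congr fun i hi => hy i ((mem_readyClasses.mp hk).2 i hi)]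

theorem partialPhi_eq_of_subset (hanti : ∀ k, Antitone (H k)) {y : Fin J → ℝ}
    {L L' : List (Fin J)} (hLL' : ∀ i ∈ L, i ∈ L') {j : Fin J} {t : ℝ}
    (hlow : ∀ k, j ∈ path k → ∀ i ∈ priorStations path k j, i ∈ L' → i ∉ L → y i ≤ t) :
    partialPhi path ρ H y L' j t = partialPhi path ρ H y L j t := by
  refine (Finset.sum_subset (fun k hk => ?_) fun k hk' hk => ?_).symm
  · obtain ⟨hjk, hprior⟩ := mem_readyClasses.mp hk
    exact mem_readyClasses.mpr ⟨hjk, fun i hi => hLL' i (hprior i hi)⟩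
  · obtain ⟨hjk, hprior'⟩ := mem_readyClasses.mp hk'
    obtain ⟨i, hi, hiL⟩ : ∃ i ∈ priorStations path k j, i ∉ L := by
      by_contra! h
      exact hk (mem_readyClasses.mpr ⟨hjk, h⟩)
    rw [max_sub_upstreamH_eq_zero hanti hi (hlow k hjk i hi (hprior' i hi) hiL), mul_zero]

theorem continuous_partialPhi (hcont : ∀ k, Continuous (H k)) (y : Fin J → ℝ)
    (L : List (Fin J)) (j : Fin J) : Continuous (partialPhi path ρ H y L j) :=
  continuous_finsetSum _ fun k _ =>
    continuous_const.mul (((hcont k).sub continuous_const).max continuous_const)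

theorem partialPhi_antitone (hρ : ∀ j k, j ∈ path k → 0 < ρ k j) (hanti : ∀ k, Antitone (H k))
    (y : Fin J → ℝ) (L : List (Fin J)) (j : Fin J) : Antitone (partialPhi path ρ H y L j) :=
  fun _ _ hst => Finset.sum_le_sum fun k hk =>
    mul_le_mul_of_nonneg_left (max_le_max_right 0 (sub_le_sub_right (hanti k hst) _))
      (hρ j k (mem_readyClasses.mp hk).1).le

theorem partialPhi_eq_zero_of_le {ystar : Fin K → ℝ} (hzero : ∀ k, ∀ y, ystar k ≤ y → H k y = 0)
    (hnonneg : ∀ k y, 0 ≤ H k y) {y : Fin J → ℝ} {L : List (Fin J)} {j : Fin J} {t : ℝ}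
    (ht : ∀ k ∈ readyClasses path L j, ystar k ≤ t) : partialPhi path ρ H y L j t = 0 :=
  Finset.sum_eq_zero fun k hk => by
    rw [hzero k t (ht k hk), zero_sub,
      max_eq_right (neg_nonpos.mpr (upstreamH_nonneg hnonneg y k j)), mul_zero]

theorem tendsto_partialPhi_atBot (hρ : ∀ j k, j ∈ path k → 0 < ρ k j)
    (hinf : ∀ k, Tendsto (H k) atBot atTop) (y : Fin J → ℝ) {L : List (Fin J)} {j : Fin J}
    (hready : (readyClasses path L j).Nonempty) :
    Tendsto (partialPhi path ρ H y L j) atBot atTop := by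
  obtain ⟨k, hk⟩ := hready
  have hρk : 0 < ρ k j := hρ j k (mem_readyClasses.mp hk).1
  have hlow (t : ℝ) : ρ k j * (H k t - upstreamH path H y k j) ≤ partialPhi path ρ H y L j t :=
    (mul_le_mul_of_nonneg_left (le_max_left _ 0) hρk.le).trans <|
      Finset.single_le_sum (f := fun k => ρ k j * max (H k t - upstreamH path H y k j) 0)
        (fun k hk => mul_nonneg (hρ j k (mem_readyClasses.mp hk).1).le (le_max_right _ _)) hk
  exact tendsto_atTop_mono hlow
    ((tendsto_atTop_add_const_right _ _ (hinf k)).const_mul_atTop hρk)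

theorem exists_partialPhi_eq (hρ : ∀ j k, j ∈ path k → 0 < ρ k j)
    (hcont : ∀ k, Continuous (H k)) {ystar : Fin K → ℝ}
    (hzero : ∀ k, ∀ y, ystar k ≤ y → H k y = 0) (hnonneg : ∀ k y, 0 ≤ H k y)
    (hinf : ∀ k, Tendsto (H k) atBot atTop) (y : Fin J → ℝ) {L : List (Fin J)} {j : Fin J}
    (hready : (readyClasses path L j).Nonempty) {c v : ℝ} (hc : partialPhi path ρ H y L j c ≤ v)
    (hv : 0 ≤ v) :
    ∃ t ≤ c, (∃ k ∈ readyClasses path L j, t ≤ ystar k) ∧ partialPhi path ρ H y L j t = v := by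
  obtain ⟨kmax, hkmax, hmax⟩ := Finset.exists_max_image _ ystar hready
  have hc' : partialPhi path ρ H y L j (min c (ystar kmax)) ≤ v := by
    rcases min_choice c (ystar kmax) with h | h
    · rwa [h]
    · rwa [h, partialPhi_eq_zero_of_le hzero hnonneg hmax]
  obtain ⟨t, ht, hval⟩ := (continuous_partialPhi hcont y L j).exists_le_eq_of_tendsto_atBot
    (tendsto_partialPhi_atBot hρ hinf y hready) hc'
  exact ⟨t, ht.trans (min_le_left _ _), ⟨kmax, hkmax, ht.trans (min_le_right _ _)⟩, hval⟩

theorem exists_readyClasses_nonempty (hcover : ∀ j : Fin J, ∃ k, j ∈ path k)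
    {R : List (Fin J)} (hR : ∃ j, j ∉ R) : ∃ j ∉ R, (readyClasses path R j).Nonempty := by
  obtain ⟨j₀, hj₀⟩ := hR
  obtain ⟨k, hk⟩ := hcover j₀
  obtain ⟨j, hj⟩ : ∃ j, (path k).find? (· ∉ R) = some j :=
    Option.isSome_iff_exists.mp (List.find?_isSome.mpr ⟨j₀, hk, by simpa using hj₀⟩)
  obtain ⟨hjR, as, bs, hpath, has⟩ := List.find?_eq_some_iff_append.mp hj
  replace hjR : j ∉ R := by simpa using hjR
  replace has : ∀ a ∈ as, a ∈ R := by simpa using has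
  have hjas : j ∉ as := fun h => hjR (has j h)
  refine ⟨j, hjR, k, mem_readyClasses.mpr ⟨by simp [hpath], fun i hi => ?_⟩⟩
  rw [priorStations_eq_of_eq_append path hpath hjas, List.mem_toFinset] at hi
  exact has i hi

end Network

theorem List.reverse_eq_drop_append_cons_take {α : Type*} (l : List α) {m : ℕ}
    (hm : m < l.length) : l.reverse = (l.drop (m + 1)).reverse ++ l[m] :: (l.take m).reverse := by
  conv_lhs => rw [← l.take_append_drop m, List.drop_eq_getElem_cons hm]
  simp

section Greedy

variable {J K : ℕ} (path : Fin K → List (Fin J)) (ρ : Fin K → Fin J → ℝ) (H : Fin K → ℝ → ℝ)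
  (ystar : Fin K → ℝ) (w : Fin J → ℝ)

/-- The stations fixed so far by the greedy construction, the most recent first. -/
inductive IsPlacement (y : Fin J → ℝ) : List (Fin J) → Prop
  | nil : IsPlacement y []
  | cons {j : Fin J} {R : List (Fin J)} : IsPlacement y R → j ∉ R → (∀ i ∈ R, y j ≤ y i) →
      (∃ k ∈ readyClasses path R j, y j ≤ ystar k) → partialPhi path ρ H y R j (y j) = w j →
      IsPlacement y (j :: R)

def Extendable (y : Fin J → ℝ) (R : List (Fin J)) : Prop :=
  ∀ j ∉ R, ∃ c, (∀ i ∈ R, c ≤ y i) ∧ partialPhi path ρ H y R j c ≤ w j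

variable {path ρ H ystar w}

namespace IsPlacement

variable {y : Fin J → ℝ} {R : List (Fin J)}

theorem congr {y' : Fin J → ℝ} (h : IsPlacement path ρ H ystar w y R)
    (hy : ∀ i ∈ R, y i = y' i) : IsPlacement path ρ H ystar w y' R := by
  induction h with
  | nil => exact .nil
  | @cons j R _ hjR hle hready hval ih =>
    have hyR : ∀ i ∈ R, y i = y' i := fun i hi => hy i (List.mem_cons_of_mem j hi)
    have hyj : y j = y' j := hy j List.mem_cons_self
    refine .cons (ih hyR) hjR (fun i hi => ?_) (hyj ▸ hready) ?_
    · rw [← hyj, ← hyR i hi]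
      exact hle i hi
    · rw [← hyj, ← partialPhi_congr hyR]
      exact hval

theorem nodup (h : IsPlacement path ρ H ystar w y R) : R.Nodup := by
  induction h with
  | nil => exact List.nodup_nil
  | cons _ hjR _ _ _ ih => exact List.nodup_cons.mpr ⟨hjR, ih⟩

theorem of_append_cons {B A : List (Fin J)} {j : Fin J}
    (h : IsPlacement path ρ H ystar w y (B ++ j :: A)) :
    (∀ i ∈ A, y j ≤ y i) ∧ (∃ k ∈ readyClasses path A j, y j ≤ ystar k) ∧
      partialPhi path ρ H y A j (y j) = w j := by
  induction B with
  | nil => cases h with | cons _ _ hle hready hval => exact ⟨hle, hready, hval⟩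
  | cons b B ih => cases h with | cons h _ _ _ _ => exact ih h

theorem le_of_mem_left {B A : List (Fin J)} {i j : Fin J}
    (h : IsPlacement path ρ H ystar w y (B ++ j :: A)) (hi : i ∈ B) : y i ≤ y j := by
  obtain ⟨B₁, B₂, rfl⟩ := List.append_of_mem hi
  rw [List.append_assoc, List.cons_append] at h
  exact h.of_append_cons.1 j (List.mem_append_right _ List.mem_cons_self)

/-- A class at `j` that is not ready when `j` is placed has an upstream station placed later,
hence lower, and so contributes nothing to `Φ_j`. -/
theorem phiNet_eq (hanti : ∀ k, Antitone (H k)) (h : IsPlacement path ρ H ystar w y R)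
    (hall : ∀ j, j ∈ R) : PhiNet path ρ H y = w := by
  funext j
  obtain ⟨B, A, hR⟩ := List.append_of_mem (hall j)
  rw [hR] at h hall
  rw [phiNet_eq_partialPhi hall, partialPhi_eq_of_subset hanti (fun i _ => hall i),
    h.of_append_cons.2.2]
  intro k _ i hi _ hiA
  have hiB : i ∈ B := by
    simpa [hiA, ne_of_mem_priorStations hi] using hall i
  exact h.le_of_mem_left hiB

theorem mem_Dset (h : IsPlacement path ρ H ystar w y R) (hall : ∀ j, j ∈ R) :
    y ∈ Dset path ystar := by
  obtain ⟨L, rfl⟩ : ∃ L : List (Fin J), R = L.reverse := ⟨R.reverse, R.reverse_reverse.symm⟩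
  have hLall : ∀ j, j ∈ L := fun j => List.mem_reverse.mp (hall j)
  let e := List.Nodup.getEquivOfForallMemList L (List.nodup_reverse.mp h.nodup) hLall
  have hlen : J = L.length := (Fin.equiv_iff_eq.mp ⟨e⟩).symm
  let π : Equiv.Perm (Fin J) := (finCongr hlen).trans e
  have hπ (m : Fin J) : π m = L[(m : ℕ)] := rfl
  have hstep (m : Fin J) : (∀ i ∈ L.take m, y (π m) ≤ y i) ∧
      ∃ k ∈ readyClasses path (L.take m).reverse (π m), y (π m) ≤ ystar k := by
    rw [L.reverse_eq_drop_append_cons_take (by omega : (m : ℕ) < L.length), ← hπ] at h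
    obtain ⟨hle, hready, -⟩ := h.of_append_cons
    exact ⟨fun i hi => hle i (List.mem_reverse.mpr hi), hready⟩
  have htake {m : Fin J} {i : Fin J} (hi : i ∈ L.take m) : ∃ m' < m, π m' = i := by
    obtain ⟨m', hm', rfl⟩ := List.mem_take_iff_getElem.mp hi
    exact ⟨⟨m', by omega⟩, Fin.mk_lt_of_lt_val (by omega), rfl⟩
  have hwit (m : Fin J) : ∃ k : Fin K,
      (π m ∈ path k ∧ ∀ i ∈ priorStations path k (π m), ∃ m' < m, π m' = i) ∧
        y (π m) ≤ ystar k := by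
    obtain ⟨k, hk, hkstar⟩ := (hstep m).2
    obtain ⟨hmk, hprior⟩ := mem_readyClasses.mp hk
    exact ⟨k, ⟨hmk, fun i hi => htake (List.mem_reverse.mp (hprior i hi))⟩, hkstar⟩
  refine Set.mem_biUnion (x := π) (fun m => (hwit m).imp fun _ hk => hk.1) ⟨?_, hwit⟩
  intro m m' hmm'
  rcases hmm'.lt_or_eq with hlt | rfl
  · exact (hstep m').1 _ (List.mem_take_iff_getElem.mpr ⟨m, by omega, rfl⟩)
  · exact le_rfl

end IsPlacement

section Extendable

theorem extendable_nil (hzero : ∀ k, ∀ y, ystar k ≤ y → H k y = 0) (hnonneg : ∀ k y, 0 ≤ H k y)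
    (hw : ∀ j, 0 ≤ w j) (y : Fin J → ℝ) : Extendable path ρ H w y [] := by
  obtain ⟨M, hM⟩ := (Finset.univ.image ystar).exists_le
  intro j _
  refine ⟨M, by simp, ?_⟩
  rw [partialPhi_eq_zero_of_le hzero hnonneg fun k _ => hM _ (Finset.mem_image_of_mem _ (by simp))]
  exact hw j

variable {y : Fin J → ℝ} {R : List (Fin J)}

theorem Extendable.exists_partialPhi_eq (hρ : ∀ j k, j ∈ path k → 0 < ρ k j)
    (hcont : ∀ k, Continuous (H k)) (hzero : ∀ k, ∀ y, ystar k ≤ y → H k y = 0)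
    (hnonneg : ∀ k y, 0 ≤ H k y) (hinf : ∀ k, Tendsto (H k) atBot atTop) (hw : ∀ j, 0 ≤ w j)
    (hext : Extendable path ρ H w y R) {j : Fin J} (hjR : j ∉ R)
    (hready : (readyClasses path R j).Nonempty) :
    ∃ t, (∀ i ∈ R, t ≤ y i) ∧ (∃ k ∈ readyClasses path R j, t ≤ ystar k) ∧
      partialPhi path ρ H y R j t = w j := by
  obtain ⟨c, hcR, hc⟩ := hext j hjR
  obtain ⟨t, htc, hk, ht⟩ :=
    _root_.exists_partialPhi_eq hρ hcont hzero hnonneg hinf y hready hc (hw j)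
  exact ⟨t, fun i hi => htc.trans (hcR i hi), hk, ht⟩

theorem extendable_cons (hanti : ∀ k, Antitone (H k)) {y' : Fin J → ℝ} {j₁ : Fin J}
    (hyR : ∀ i ∈ R, y i = y' i) (hle : ∀ i ∈ R, y' j₁ ≤ y i)
    (hbound : ∀ j ∉ j₁ :: R, partialPhi path ρ H y R j (y' j₁) ≤ w j) :
    Extendable path ρ H w y' (j₁ :: R) := by
  intro j hj
  refine ⟨y' j₁, fun i hi => ?_, ?_⟩
  · rcases List.mem_cons.mp hi with rfl | hi
    · exact le_rfl
    · exact (hle i hi).trans_eq (hyR i hi)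
  · rw [partialPhi_eq_of_subset hanti (fun i hi => List.mem_cons_of_mem _ hi),
      ← partialPhi_congr hyR]
    · exact hbound j hj
    · intro k _ i _ hi hiR
      obtain rfl : i = j₁ := by simpa [hiR] using hi
      exact le_rfl

end Extendable

theorem IsPlacement.exists_cons (hρ : ∀ j k, j ∈ path k → 0 < ρ k j)
    (hcont : ∀ k, Continuous (H k)) (hanti : ∀ k, Antitone (H k))
    (hzero : ∀ k, ∀ y, ystar k ≤ y → H k y = 0) (hnonneg : ∀ k y, 0 ≤ H k y)
    (hinf : ∀ k, Tendsto (H k) atBot atTop) (hcover : ∀ j : Fin J, ∃ k, j ∈ path k)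
    (hw : ∀ j, 0 ≤ w j) {y : Fin J → ℝ} {R : List (Fin J)}
    (h : IsPlacement path ρ H ystar w y R) (hext : Extendable path ρ H w y R) (hR : ∃ j, j ∉ R) :
    ∃ j y', IsPlacement path ρ H ystar w y' (j :: R) ∧ Extendable path ρ H w y' (j :: R) := by
  set cand : Finset (Fin J) := {j | j ∉ R ∧ (readyClasses path R j).Nonempty}
  have hsolve (j : Fin J) : ∃ t, j ∈ cand → (∀ i ∈ R, t ≤ y i) ∧
      (∃ k ∈ readyClasses path R j, t ≤ ystar k) ∧ partialPhi path ρ H y R j t = w j := by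
    by_cases hj : j ∈ cand
    · obtain ⟨hjR, hready⟩ := (Finset.mem_filter.mp hj).2
      obtain ⟨t, ht⟩ := hext.exists_partialPhi_eq hρ hcont hzero hnonneg hinf hw hjR hready
      exact ⟨t, fun _ => ht⟩
    · exact ⟨0, fun hj' => absurd hj' hj⟩
  choose t ht using hsolve
  obtain ⟨j₀, hj₀R, hready₀⟩ := exists_readyClasses_nonempty hcover hR
  obtain ⟨j₁, hj₁, hmax⟩ := Finset.exists_max_image cand t ⟨j₀, by simp [cand, hj₀R, hready₀]⟩
  obtain ⟨hle, hready, hval⟩ := ht j₁ hj₁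
  have hj₁R : j₁ ∉ R := (Finset.mem_filter.mp hj₁).2.1
  set y' := Function.update y j₁ (t j₁)
  have hy'j₁ : y' j₁ = t j₁ := Function.update_self ..
  have hyR : ∀ i ∈ R, y i = y' i := fun i hi =>
    (Function.update_of_ne (ne_of_mem_of_not_mem hi hj₁R) _ _).symm
  refine ⟨j₁, y', .cons (h.congr hyR) hj₁R (fun i hi => ?_) (hy'j₁ ▸ hready) ?_,
    extendable_cons hanti hyR (hy'j₁ ▸ hle) fun j hj => ?_⟩
  · rw [hy'j₁, ← hyR i hi]
    exact hle i hi
  · rw [hy'j₁, ← partialPhi_congr hyR]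
    exact hval
  · rw [hy'j₁]
    by_cases hreadyj : (readyClasses path R j).Nonempty
    · have hjcand : j ∈ cand := by simp [cand, List.not_mem_of_not_mem_cons hj, hreadyj]
      exact (partialPhi_antitone hρ hanti y R j (hmax j hjcand)).trans_eq (ht j hjcand).2.2
    · rw [partialPhi, Finset.not_nonempty_iff_eq_empty.mp hreadyj, Finset.sum_empty]
      exact hw j

theorem exists_isPlacement_forall_mem (hρ : ∀ j k, j ∈ path k → 0 < ρ k j)
    (hcont : ∀ k, Continuous (H k)) (hanti : ∀ k, Antitone (H k))
    (hzero : ∀ k, ∀ y, ystar k ≤ y → H k y = 0) (hnonneg : ∀ k y, 0 ≤ H k y)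
    (hinf : ∀ k, Tendsto (H k) atBot atTop) (hcover : ∀ j : Fin J, ∃ k, j ∈ path k)
    (hw : ∀ j, 0 ≤ w j) :
    ∃ y R, IsPlacement path ρ H ystar w y R ∧ ∀ j, j ∈ R := by
  have hgrow (n : ℕ) : ∃ y R, IsPlacement path ρ H ystar w y R ∧ Extendable path ρ H w y R ∧
      (n ≤ R.length ∨ ∀ j, j ∈ R) := by
    induction n with
    | zero => exact ⟨0, [], .nil, extendable_nil hzero hnonneg hw 0, .inl le_rfl⟩
    | succ n ih =>
      obtain ⟨y, R, h, hext, hlen⟩ := ih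
      by_cases hall : ∀ j, j ∈ R
      · exact ⟨y, R, h, hext, .inr hall⟩
      obtain ⟨j, y', h', hext'⟩ :=
        h.exists_cons hρ hcont hanti hzero hnonneg hinf hcover hw hext (not_forall.mp hall)
      refine ⟨y', j :: R, h', hext', .inl ?_⟩
      rw [List.length_cons]
      exact Nat.succ_le_succ (hlen.resolve_right hall)
  obtain ⟨y, R, h, -, hlen | hall⟩ := hgrow (J + 1)
  · have := h.nodup.length_le_card
    simp only [Fintype.card_fin] at this
    omega
  · exact ⟨y, R, h, hall⟩

end Greedy

theorem stmt11_general
    {J K : ℕ}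
    (path : Fin K → List (Fin J))
    (hcover : ∀ j : Fin J, ∃ k, j ∈ path k)
    (ρ : Fin K → Fin J → ℝ) (hρ : ∀ j k, j ∈ path k → 0 < ρ k j)
    (H : Fin K → ℝ → ℝ) (ystar : Fin K → ℝ)
    (hcont : ∀ k, Continuous (H k))
    (hanti : ∀ k, Antitone (H k))
    (hzero : ∀ k, ∀ y, ystar k ≤ y → H k y = 0)
    (hnonneg : ∀ k y, 0 ≤ H k y)
    (hinf : ∀ k, Filter.Tendsto (H k) Filter.atBot Filter.atTop)
    (w : Fin J → ℝ) (hw : ∀ j, 0 ≤ w j) :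
    ∃ y ∈ Dset path ystar, PhiNet path ρ H y = w := by
  obtain ⟨y, R, h, hall⟩ :=
    exists_isPlacement_forall_mem hρ hcont hanti hzero hnonneg hinf hcover hw
  exact ⟨y, h.mem_Dset hall, h.phiNet_eq hanti hall⟩

theorem stmt11
    {J K : ℕ} (hJ : 0 < J)
    (path : Fin K → List (Fin J))
    (hnodup : ∀ k, (path k).Nodup) (hne : ∀ k, path k ≠ [])
    (hcover : ∀ j : Fin J, ∃ k, j ∈ path k)
    (hconn : ∀ j j' : Fin J,
      Relation.ReflTransGen (fun a b => ∃ k, a ∈ path k ∧ b ∈ path k) j j')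
    (ρ : Fin K → Fin J → ℝ) (hρ : ∀ j k, j ∈ path k → 0 < ρ k j)
    (hρsum : ∀ j : Fin J, ∑ k ∈ Finset.univ.filter (fun k => j ∈ path k), ρ k j = 1)
    (H : Fin K → ℝ → ℝ) (ystar : Fin K → ℝ)
    (hcont : ∀ k, Continuous (H k))
    (hanti : ∀ k, Antitone (H k))
    (hstrict : ∀ k, StrictAntiOn (H k) (Set.Iic (ystar k)))
    (hzero : ∀ k, ∀ y, ystar k ≤ y → H k y = 0)
    (hnonneg : ∀ k y, 0 ≤ H k y)
    (hinf : ∀ k, Filter.Tendsto (H k) Filter.atBot Filter.atTop)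
    (w : Fin J → ℝ) (hw : ∀ j, 0 ≤ w j) :
    ∃ y ∈ Dset path ystar, PhiNet path ρ H y = w :=
  stmt11_general path hcover ρ hρ H ystar hcont hanti hzero hnonneg hinf w hw
end

section
/- In the acyclic network setting, the map Φ : D → [0,∞)^J is injective. -/
open scoped Classical

/- If `y ∈ D^π` and `z` first differs from `y` at `π m` with `z (π m) < y (π m)`, then
`Φ(y) < Φ(z)` at station `π m`. Along `π` the coordinates of `y` decrease, so every station
where `y` exceeds `y (π m)` comes before `π m`, where `y` and `z` agree: no summand of `Φ` at
`π m` decreases from `y` to `z`. The class `k` of `D^π` that reaches `π m` through earlier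
stations has its whole prior route unchanged and at least as high as `y (π m)`, so its
summand strictly increases because `H k` is strictly decreasing below `y^*_k`.
For `y ∈ D^π`, `z ∈ D^σ` with `y ≠ z`, either this applies at the first difference `π m`
along `π`, or `z (π m) > y (π m)` and then the first difference `σ n` along `σ` has
`z (σ n) ≥ z (π m) > y (π m) ≥ y (σ n)`, so it applies with `y` and `z` exchanged. -/

lemma exists_first_ne {ι β : Type*} [LT ι] [WellFoundedLT ι] {u v : ι → β}
    (h : u ≠ v) : ∃ m, u m ≠ v m ∧ ∀ m' < m, v m' = u m' := by
  obtain ⟨i, hi⟩ := Function.ne_iff.mp h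
  obtain ⟨m, hm, hmin⟩ := wellFounded_lt.has_min {m | u m ≠ v m} ⟨i, hi⟩
  exact ⟨m, hm, fun m' hm' => by_contra fun hne => hmin m' (Ne.symm hne) hm'⟩

lemma eq_of_lt_of_eq_before {ι β : Type*} [LinearOrder ι] [Preorder β]
    {π : Equiv.Perm ι} {y z : ι → β} (hy : Antitone (y ∘ π)) {m : ι}
    (hagree : ∀ m' < m, z (π m') = y (π m')) {i : ι} (hi : y (π m) < y i) : z i = y i := by
  rw [← π.apply_symm_apply i] at hi ⊢
  refine hagree _ (lt_of_not_ge fun hle => ?_)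
  exact (hy hle).not_gt hi

section Summand

variable {J K : ℕ} (path : Fin K → List (Fin J)) (H : Fin K → ℝ → ℝ)

/-- The subtracted term `H_k(min_{i ∈ S(k|j)} y_i)` in the `k`-th summand of `Φ_j`. -/
noncomputable def priorLoad (k : Fin K) (j : Fin J) (y : Fin J → ℝ) : ℝ :=
  if h : (priorStations path k j).Nonempty then H k ((priorStations path k j).inf' h y) else 0

lemma phiNet_eq_sum (ρ : Fin K → Fin J → ℝ) (y : Fin J → ℝ) (j : Fin J) :
    PhiNet path ρ H y j = ∑ k ∈ Finset.univ.filter (fun k => j ∈ path k),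
      ρ k j * max (H k (y j) - priorLoad path H k j y) 0 :=
  rfl

variable {path H}

lemma priorLoad_congr {k : Fin K} {j : Fin J} {y z : Fin J → ℝ}
    (h : ∀ i ∈ priorStations path k j, z i = y i) :
    priorLoad path H k j z = priorLoad path H k j y := by
  unfold priorLoad
  split_ifs with hne
  · rw [Finset.inf'_congr hne rfl h]
  · rfl

lemma priorLoad_le {k : Fin K} (hanti : Antitone (H k)) (hnonneg : ∀ t, 0 ≤ H k t)
    {j : Fin J} {y : Fin J → ℝ} {t : ℝ} (h : ∀ i ∈ priorStations path k j, t ≤ y i) :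
    priorLoad path H k j y ≤ H k t := by
  unfold priorLoad
  split_ifs with hne
  · exact hanti (Finset.le_inf' hne _ h)
  · exact hnonneg t

lemma apply_le_priorLoad {k : Fin K} (hanti : Antitone (H k)) {j i : Fin J}
    (hi : i ∈ priorStations path k j) {y : Fin J → ℝ} (hij : y i ≤ y j) :
    H k (y j) ≤ priorLoad path H k j y := by
  have hne : (priorStations path k j).Nonempty := ⟨i, hi⟩
  rw [priorLoad, dif_pos hne]
  exact hanti ((Finset.inf'_le y hi).trans hij)

lemma summand_mono {k : Fin K} (hanti : Antitone (H k)) {j : Fin J} {y z : Fin J → ℝ}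
    (hj : z j ≤ y j) (hprior : ∀ i ∈ priorStations path k j, y j < y i → z i = y i) :
    max (H k (y j) - priorLoad path H k j y) 0 ≤ max (H k (z j) - priorLoad path H k j z) 0 := by
  by_cases hlow : ∃ i ∈ priorStations path k j, y i ≤ y j
  · obtain ⟨i, hi, hij⟩ := hlow
    rw [max_eq_right (sub_nonpos.mpr (apply_le_priorLoad hanti hi hij))]
    exact le_max_right _ _
  · push Not at hlow
    rw [priorLoad_congr fun i hi => hprior i hi (hlow i hi)]
    exact max_le_max_right 0 (sub_le_sub_right (hanti hj) _)

lemma summand_strictMono {k : Fin K} {ystar : ℝ} (hanti : Antitone (H k))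
    (hstrict : StrictAntiOn (H k) (Set.Iic ystar)) (hnonneg : ∀ t, 0 ≤ H k t)
    {j : Fin J} {y z : Fin J → ℝ} (hj : z j < y j) (hstar : y j ≤ ystar)
    (hprior : ∀ i ∈ priorStations path k j, z i = y i ∧ y j ≤ y i) :
    max (H k (y j) - priorLoad path H k j y) 0 < max (H k (z j) - priorLoad path H k j z) 0 := by
  have hH : H k (y j) < H k (z j) := hstrict (hj.le.trans hstar) hstar hj
  have hload : priorLoad path H k j y ≤ H k (y j) :=
    priorLoad_le hanti hnonneg fun i hi => (hprior i hi).2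
  rw [priorLoad_congr fun i hi => (hprior i hi).1, max_eq_left (sub_nonneg.mpr hload)]
  exact (sub_lt_sub_right hH _).trans_le (le_max_left _ _)

end Summand

lemma phiNet_lt_of_first_lt {J K : ℕ} {path : Fin K → List (Fin J)}
    {ρ : Fin K → Fin J → ℝ} (hρ : ∀ j k, j ∈ path k → 0 < ρ k j)
    {H : Fin K → ℝ → ℝ} {ystar : Fin K → ℝ} (hanti : ∀ k, Antitone (H k))
    (hstrict : ∀ k, StrictAntiOn (H k) (Set.Iic (ystar k))) (hnonneg : ∀ k y, 0 ≤ H k y)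
    {π : Equiv.Perm (Fin J)} {y z : Fin J → ℝ} (hy : y ∈ Dpi path ystar π) {m : Fin J}
    (hagree : ∀ m' < m, z (π m') = y (π m')) (hlt : z (π m) < y (π m)) :
    PhiNet path ρ H y (π m) < PhiNet path ρ H z (π m) := by
  obtain ⟨hmono, hreach⟩ := hy
  obtain ⟨k, ⟨hk, hkprior⟩, hkstar⟩ := hreach m
  rw [phiNet_eq_sum, phiNet_eq_sum]
  refine Finset.sum_lt_sum (fun k' hk' => ?_)
    ⟨k, Finset.mem_filter.mpr ⟨Finset.mem_univ _, hk⟩, ?_⟩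
  · refine mul_le_mul_of_nonneg_left ?_ (hρ _ _ (Finset.mem_filter.mp hk').2).le
    exact summand_mono (hanti k') hlt.le fun i _ hi => eq_of_lt_of_eq_before hmono hagree hi
  · refine mul_lt_mul_of_pos_left ?_ (hρ _ _ hk)
    refine summand_strictMono (hanti k) (hstrict k) (hnonneg k) hlt hkstar fun i hi => ?_
    obtain ⟨m', hm', rfl⟩ := hkprior i hi
    exact ⟨hagree m' hm', hmono _ _ hm'.le⟩

theorem stmt12_general
    {J K : ℕ}
    (path : Fin K → List (Fin J))
    (ρ : Fin K → Fin J → ℝ) (hρ : ∀ j k, j ∈ path k → 0 < ρ k j)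
    (H : Fin K → ℝ → ℝ) (ystar : Fin K → ℝ)
    (hanti : ∀ k, Antitone (H k))
    (hstrict : ∀ k, StrictAntiOn (H k) (Set.Iic (ystar k)))
    (hnonneg : ∀ k y, 0 ≤ H k y)
    : Set.InjOn (PhiNet path ρ H) (Dset path ystar) := by
  intro y hy z hz hPhi
  by_contra hne
  simp only [Dset, Set.mem_iUnion] at hy hz
  obtain ⟨π, -, hyπ⟩ := hy
  obtain ⟨σ, -, hzσ⟩ := hz
  have phi_ne {u v : Fin J → ℝ} {τ : Equiv.Perm (Fin J)} (hu : u ∈ Dpi path ystar τ)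
      {m : Fin J} (hagree : ∀ m' < m, v (τ m') = u (τ m')) (h : v (τ m) < u (τ m)) :
      PhiNet path ρ H u ≠ PhiNet path ρ H v := fun heq =>
    (phiNet_lt_of_first_lt hρ hanti hstrict hnonneg hu hagree h).ne (congrFun heq _)
  obtain ⟨m, hm, hagree⟩ := exists_first_ne (π.surjective.injective_comp_right.ne hne)
  obtain ⟨n, hn, hagree'⟩ :=
    exists_first_ne (σ.surjective.injective_comp_right.ne (Ne.symm hne))
  rcases lt_or_gt_of_ne hm with hyz | hzy
  · have hy_le : y (σ n) ≤ y (π m) :=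
      not_lt.mp fun h => hn (eq_of_lt_of_eq_before hyπ.1 hagree h)
    have hz_le : z (π m) ≤ z (σ n) :=
      not_lt.mp fun h => hm (eq_of_lt_of_eq_before hzσ.1 hagree' h)
    exact phi_ne hzσ hagree' (hy_le.trans_lt (hyz.trans_le hz_le)) hPhi.symm
  · exact phi_ne hyπ hagree hzy hPhi

theorem stmt12
    {J K : ℕ} (hJ : 0 < J)
    (path : Fin K → List (Fin J))
    (hnodup : ∀ k, (path k).Nodup) (hne : ∀ k, path k ≠ [])
    (hcover : ∀ j : Fin J, ∃ k, j ∈ path k)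
    (hconn : ∀ j j' : Fin J,
      Relation.ReflTransGen (fun a b => ∃ k, a ∈ path k ∧ b ∈ path k) j j')
    (ρ : Fin K → Fin J → ℝ) (hρ : ∀ j k, j ∈ path k → 0 < ρ k j)
    (hρsum : ∀ j : Fin J, ∑ k ∈ Finset.univ.filter (fun k => j ∈ path k), ρ k j = 1)
    (H : Fin K → ℝ → ℝ) (ystar : Fin K → ℝ)
    (hcont : ∀ k, Continuous (H k))
    (hanti : ∀ k, Antitone (H k))
    (hstrict : ∀ k, StrictAntiOn (H k) (Set.Iic (ystar k)))
    (hzero : ∀ k, ∀ y, ystar k ≤ y → H k y = 0)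
    (hnonneg : ∀ k y, 0 ≤ H k y)
    (hinf : ∀ k, Filter.Tendsto (H k) Filter.atBot Filter.atTop)
    : Set.InjOn (PhiNet path ρ H) (Dset path ystar) :=
  stmt12_general path ρ hρ H ystar hanti hstrict hnonneg
end

section
/- In the acyclic network setting, ‖Φ(y)‖ → ∞ as ‖y‖ → ∞ with y ranging over D; i.e., for every M there exists R such that y ∈ D and ‖y‖ ≥ R imply ‖Φ(y)‖ ≥ M. Equivalently, the preimage under Φ of any bounded subset of [0,∞)^J is bounded in D. -/
/-!
A bound `‖Φ y‖ ≤ M` bounds every positive part `[H_k(y_j) - H_k(min_{i ∈ S(k|j)} y_i)]⁺`,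
since the weights `ρ_{k,j}` are positive. Along an admissible order `π`, the prior stations of
the station `π m` all come earlier in `π`, so once `y` is bounded below on them, the bound on the
positive part bounds `H_k(y_{π m})` from above, hence (as `H_k → ∞` at `-∞`) bounds `y_{π m}` from
below; there are finitely many stations, classes and positions, so the bounds can be made uniform.
Above, every `y ∈ D^π` is bounded by the `y*_k`.
-/

open scoped Classical

open Filter Finset

noncomputable def phiTerm {J K : ℕ} (path : Fin K → List (Fin J)) (H : Fin K → ℝ → ℝ)
    (k : Fin K) (j : Fin J) (y : Fin J → ℝ) : ℝ :=
  max (H k (y j) -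
    (if h : (priorStations path k j).Nonempty
      then H k ((priorStations path k j).inf' h y) else 0)) 0

lemma exists_forall_le_forall_lt_of_tendsto {ι α β : Type*} [Finite ι]
    [SemilatticeInf α] [Nonempty α] [Preorder β] [NoTopOrder β]
    {f : ι → α → β} (hf : ∀ i, Tendsto (f i) atBot atTop) (c : ι → β) :
    ∃ a, ∀ x ≤ a, ∀ i, c i < f i x :=
  eventually_atBot.1 (eventually_all.2 fun i => (hf i).eventually_gt_atTop (c i))

section PhiNet

variable {J K : ℕ} {path : Fin K → List (Fin J)} {ρ : Fin K → Fin J → ℝ}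
  {H : Fin K → ℝ → ℝ} {ystar : Fin K → ℝ}

lemma mul_phiTerm_le_norm_PhiNet (hρ : ∀ j k, j ∈ path k → 0 < ρ k j) {k : Fin K} {j : Fin J}
    (hk : j ∈ path k) (y : Fin J → ℝ) :
    ρ k j * phiTerm path H k j y ≤ ‖PhiNet path ρ H y‖ :=
  calc ρ k j * phiTerm path H k j y
      ≤ ∑ k' ∈ univ.filter (fun k' => j ∈ path k'), ρ k' j * phiTerm path H k' j y :=
        single_le_sum (f := fun k' => ρ k' j * phiTerm path H k' j y)
          (fun k' hk' => mul_nonneg (hρ j k' (mem_filter.1 hk').2).le (le_max_right _ _))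
          (mem_filter.2 ⟨mem_univ k, hk⟩)
    _ = PhiNet path ρ H y j := rfl
    _ ≤ ‖PhiNet path ρ H y‖ := (Real.le_norm_self _).trans (norm_le_pi_norm _ j)

lemma phiTerm_le_of_norm_PhiNet_le (hρ : ∀ j k, j ∈ path k → 0 < ρ k j) {M : ℝ}
    {y : Fin J → ℝ} (hy : ‖PhiNet path ρ H y‖ ≤ M) {k : Fin K} {j : Fin J} (hk : j ∈ path k) :
    phiTerm path H k j y ≤ M / ρ k j := by
  rw [le_div_iff₀ (hρ j k hk), mul_comm]
  exact (mul_phiTerm_le_norm_PhiNet hρ hk y).trans hy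

lemma apply_le_add_of_phiTerm_le {k : Fin K} (hanti : Antitone (H k)) {j : Fin J}
    {y : Fin J → ℝ} {a b : ℝ} (hprior : ∀ i ∈ priorStations path k j, a ≤ y i)
    (hb : phiTerm path H k j y ≤ b) :
    H k (y j) ≤ b + max (H k a) 0 := by
  have hsub : (if h : (priorStations path k j).Nonempty
      then H k ((priorStations path k j).inf' h y) else 0) ≤ max (H k a) 0 := by
    split_ifs with h
    · exact (hanti (le_inf' h y hprior)).trans (le_max_left _ _)
    · exact le_max_right _ _
  have := (le_max_left _ _).trans hb
  linarith

lemma exists_forall_lt_of_phiTerm_le (hanti : ∀ k, Antitone (H k))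
    (hinf : ∀ k, Tendsto (H k) atBot atTop) (B : Fin K → Fin J → ℝ) :
    ∃ a, ∀ y : Fin J → ℝ, (∀ k j, j ∈ path k → phiTerm path H k j y ≤ B k j) →
      ∀ π, AdmissiblePerm path π → ∀ j, a < y j := by
  suffices h : ∀ n : ℕ, ∃ a, ∀ y : Fin J → ℝ,
      (∀ k j, j ∈ path k → phiTerm path H k j y ≤ B k j) →
      ∀ π, AdmissiblePerm path π → ∀ m : Fin J, m.val < n → a < y (π m) by
    obtain ⟨a, ha⟩ := h J
    refine ⟨a, fun y hy π hπ j => ?_⟩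
    simpa using ha y hy π hπ (π.symm j) (π.symm j).isLt
  intro n
  induction n with
  | zero => exact ⟨0, fun _ _ _ _ m hm => absurd hm (Nat.not_lt_zero _)⟩
  | succ n ih =>
    obtain ⟨a, ha⟩ := ih
    obtain ⟨a', ha'⟩ := exists_forall_le_forall_lt_of_tendsto (fun p : Fin K × Fin J => hinf p.1)
      (fun p => B p.1 p.2 + max (H p.1 a) 0)
    refine ⟨min a a', fun y hy π hπ m hm => ?_⟩
    rcases Nat.lt_succ_iff_lt_or_eq.1 hm with hlt | heq
    · exact (min_le_left _ _).trans_lt (ha y hy π hπ m hlt)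
    obtain ⟨k, hk, hprior⟩ := hπ m
    have hprior_ge : ∀ i ∈ priorStations path k (π m), a ≤ y i := by
      intro i hi
      obtain ⟨m', hm', rfl⟩ := hprior i hi
      exact (ha y hy π hπ m' (heq ▸ hm')).le
    have hH := apply_le_add_of_phiTerm_le (hanti k) hprior_ge (hy k (π m) hk)
    refine (min_le_right _ _).trans_lt (lt_of_not_ge fun hle => ?_)
    exact (ha' _ hle (k, π m)).not_ge hH

lemma exists_le_ystar_of_mem_Dset {y : Fin J → ℝ} (hy : y ∈ Dset path ystar) (j : Fin J) :
    ∃ k, y j ≤ ystar k := by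
  obtain ⟨π, -, -, hwit⟩ := Set.mem_iUnion₂.1 hy
  obtain ⟨k, -, hk⟩ := hwit (π.symm j)
  exact ⟨k, by simpa using hk⟩

lemma isBounded_Dset_inter_norm_PhiNet_le (hρ : ∀ j k, j ∈ path k → 0 < ρ k j)
    (hanti : ∀ k, Antitone (H k)) (hinf : ∀ k, Tendsto (H k) atBot atTop) (M : ℝ) :
    Bornology.IsBounded {y ∈ Dset path ystar | ‖PhiNet path ρ H y‖ ≤ M} := by
  obtain ⟨a, ha⟩ := exists_forall_lt_of_phiTerm_le (path := path) hanti hinf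
    (fun k j => M / ρ k j)
  refine (Metric.isBounded_Icc (fun _ => a) (fun _ => ∑ k, |ystar k|)).subset ?_
  rintro y ⟨hyD, hyM⟩
  obtain ⟨π, hπ, -⟩ := Set.mem_iUnion₂.1 hyD
  refine ⟨fun j => (ha y (fun k j hk => phiTerm_le_of_norm_PhiNet_le hρ hyM hk) π hπ j).le,
    fun j => ?_⟩
  obtain ⟨k, hk⟩ := exists_le_ystar_of_mem_Dset hyD j
  exact hk.trans ((le_abs_self _).trans
    (single_le_sum (f := fun k => |ystar k|) (fun _ _ => abs_nonneg _) (mem_univ k)))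

end PhiNet

theorem stmt13_general
    {J K : ℕ}
    (path : Fin K → List (Fin J))
    (ρ : Fin K → Fin J → ℝ) (hρ : ∀ j k, j ∈ path k → 0 < ρ k j)
    (H : Fin K → ℝ → ℝ) (ystar : Fin K → ℝ)
    (hanti : ∀ k, Antitone (H k))
    (hinf : ∀ k, Filter.Tendsto (H k) Filter.atBot Filter.atTop)
    : ∀ M : ℝ, ∃ R : ℝ, ∀ y ∈ Dset path ystar, R ≤ ‖y‖ → M ≤ ‖PhiNet path ρ H y‖ := by
  intro M
  obtain ⟨C, hC⟩ := isBounded_iff_forall_norm_le.1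
    (isBounded_Dset_inter_norm_PhiNet_le (ystar := ystar) hρ hanti hinf M)
  refine ⟨C + 1, fun y hy hR => ?_⟩
  by_contra! hlt
  linarith [hC y ⟨hy, hlt.le⟩]

theorem stmt13
    {J K : ℕ} (hJ : 0 < J)
    (path : Fin K → List (Fin J))
    (hnodup : ∀ k, (path k).Nodup) (hne : ∀ k, path k ≠ [])
    (hcover : ∀ j : Fin J, ∃ k, j ∈ path k)
    (hconn : ∀ j j' : Fin J,
      Relation.ReflTransGen (fun a b => ∃ k, a ∈ path k ∧ b ∈ path k) j j')
    (ρ : Fin K → Fin J → ℝ) (hρ : ∀ j k, j ∈ path k → 0 < ρ k j)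
    (hρsum : ∀ j : Fin J, ∑ k ∈ Finset.univ.filter (fun k => j ∈ path k), ρ k j = 1)
    (H : Fin K → ℝ → ℝ) (ystar : Fin K → ℝ)
    (hcont : ∀ k, Continuous (H k))
    (hanti : ∀ k, Antitone (H k))
    (hstrict : ∀ k, StrictAntiOn (H k) (Set.Iic (ystar k)))
    (hzero : ∀ k, ∀ y, ystar k ≤ y → H k y = 0)
    (hnonneg : ∀ k y, 0 ≤ H k y)
    (hinf : ∀ k, Filter.Tendsto (H k) Filter.atBot Filter.atTop)
    : ∀ M : ℝ, ∃ R : ℝ, ∀ y ∈ Dset path ystar, R ≤ ‖y‖ → M ≤ ‖PhiNet path ρ H y‖ :=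
  stmt13_general path ρ hρ H ystar hanti hinf
end
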